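/- If Y and Z are vector fields on M tangent to the constraint surface Σ = {θ_α = 0} (i.e. Yθ_α = Y^β_α θ_β and Zθ_α = Z^β_α θ_β for some smooth functions), then (∇̄_Y Z)θ_α vanishes on Σ; hence the Dirac connection ∇̄ restricts to a connection on Σ. -/

import Mathlib

open Matrix

/-- Standard basis vector of `Fin n → ℝ`. -/
noncomputable def bvec (n : ℕ) (i : Fin n) : Fin n → ℝ := Pi.single i 1

/-- First partial derivative `∂_i f` at `x`. -/
noncomputable def d1 {n : ℕ} (f : (Fin n → ℝ) → ℝ) (x : Fin n → ℝ) (i : Fin n) : ℝ :=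
  fderiv ℝ f x (bvec n i)

/-- Second partial derivative `∂_i ∂_j f` at `x`. -/
noncomputable def d2 {n : ℕ} (f : (Fin n → ℝ) → ℝ) (x : Fin n → ℝ) (i j : Fin n) : ℝ :=
  fderiv ℝ (fun y => fderiv ℝ f y (bvec n j)) x (bvec n i)

/-- Christoffel symbols `Γ^k_{ij} = ω^{kl} Γ_{lij}` of the symplectic connection. -/
noncomputable def chris {n : ℕ} (ωinv : (Fin n → ℝ) → Matrix (Fin n) (Fin n) ℝ)
    (Γl : (Fin n → ℝ) → Fin n → Fin n → Fin n → ℝ)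
    (x : Fin n → ℝ) (k i j : Fin n) : ℝ :=
  ∑ l, ωinv x k l * Γl x l i j

/-- Second covariant derivative `∇_i ∇_j θ_α = ∂_i ∂_j θ_α − Γ^m_{ij} ∂_m θ_α`. -/
noncomputable def nabla2 {n : ℕ} (ωinv : (Fin n → ℝ) → Matrix (Fin n) (Fin n) ℝ)
    (Γl : (Fin n → ℝ) → Fin n → Fin n → Fin n → ℝ)
    (θ : (Fin n → ℝ) → ℝ) (x : Fin n → ℝ) (i j : Fin n) : ℝ :=
  d2 θ x i j - ∑ m, chris ωinv Γl x m i j * d1 θ x m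

/-- The Dirac matrix `Δ_{αβ} = ∂_i θ_α ω^{ij} ∂_j θ_β`. -/
noncomputable def diracMat {n m : ℕ} (ωinv : (Fin n → ℝ) → Matrix (Fin n) (Fin n) ℝ)
    (θ : Fin m → (Fin n → ℝ) → ℝ) (x : Fin n → ℝ) (α β : Fin m) : ℝ :=
  ∑ i, ∑ j, d1 (θ α) x i * ωinv x i j * d1 (θ β) x j

/-- Christoffel symbols of the Dirac connection
`Γ̄^k_{ij} = ω^{kl} (Γ_{lij} + ∂_l θ_β Δ^{βα} ∇_i ∇_j θ_α)`. -/
noncomputable def diracChris {n m : ℕ} (ωinv : (Fin n → ℝ) → Matrix (Fin n) (Fin n) ℝ)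
    (Γl : (Fin n → ℝ) → Fin n → Fin n → Fin n → ℝ)
    (θ : Fin m → (Fin n → ℝ) → ℝ) (Δinv : (Fin n → ℝ) → Fin m → Fin m → ℝ)
    (x : Fin n → ℝ) (k i j : Fin n) : ℝ :=
  ∑ l, ωinv x k l * (Γl x l i j
    + ∑ β, ∑ α, d1 (θ β) x l * Δinv x β α * nabla2 ωinv Γl (θ α) x i j)


section AuxLemmas

/-- A continuous linear functional on `Fin n → ℝ` is determined by its values on the
standard basis. -/
lemma clm_eq_sum {n : ℕ} (L : (Fin n → ℝ) →L[ℝ] ℝ) (v : Fin n → ℝ) :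
    L v = ∑ i, v i * L (bvec n i) := by
  have h : v = ∑ i, v i • (Pi.single i (1:ℝ) : Fin n → ℝ) := by
    funext j; simp [Finset.sum_apply, Pi.single_apply]
  conv_lhs => rw [h]
  simp [bvec, smul_eq_mul]

lemma contDiff_d1 {n : ℕ} {f : (Fin n → ℝ) → ℝ} (hf : ContDiff ℝ (⊤ : ℕ∞) f) (i : Fin n) :
    ContDiff ℝ (⊤ : ℕ∞) (fun x => d1 f x i) := by
  simp only [d1]
  exact (hf.fderiv_right (by simp)).clm_apply contDiff_const

/-- If `g` is differentiable at `a` and vanishes on the level set `{y | f y = f a}` of a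
map `f` having a surjective strict derivative at `a`, then the derivative of `g` at `a`
kills the kernel of `f'`. -/
lemma key_vanish {E F : Type*} [NormedAddCommGroup E] [NormedSpace ℝ E] [CompleteSpace E]
    [NormedAddCommGroup F] [NormedSpace ℝ F] [FiniteDimensional ℝ F]
    {f : E → F} {f' : E →L[ℝ] F} {a : E} (hf : HasStrictFDerivAt f f' a)
    (hsurj : f'.range = ⊤)
    {g : E → ℝ} (hg : DifferentiableAt ℝ g a)
    (hvan : ∀ y, f y = f a → g y = 0)
    {w : E} (hw : f' w = 0) : fderiv ℝ g a w = 0 := by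
  have hψd : HasStrictFDerivAt (hf.implicitFunction f f' hsurj (f a))
      f'.ker.subtypeL 0 := hf.to_implicitFunction hsurj
  have hψ0 : hf.implicitFunction f f' hsurj (f a) 0 = a :=
    hf.implicitFunction_apply_image hsurj
  have hev : ∀ᶠ z : f'.ker in nhds 0,
      f (hf.implicitFunction f f' hsurj (f a) z) = f a := by
    have h1 := hf.map_implicitFunction_eq hsurj
    have h2 : Filter.Tendsto (fun z : f'.ker => ((f a), z)) (nhds 0)
        (nhds (f a, 0)) := tendsto_const_nhds.prodMk_nhds Filter.tendsto_id
    exact h2.eventually h1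
  have hgev : (fun z => g (hf.implicitFunction f f' hsurj (f a) z))
      =ᶠ[nhds (0 : f'.ker)] (fun _ => (0:ℝ)) :=
    hev.mono fun z hz => hvan _ hz
  have hcomp : HasFDerivAt (fun z => g (hf.implicitFunction f f' hsurj (f a) z))
      ((fderiv ℝ g a).comp f'.ker.subtypeL) 0 := by
    have hga : HasFDerivAt g (fderiv ℝ g a) (hf.implicitFunction f f' hsurj (f a) 0) := by
      rw [hψ0]; exact hg.hasFDerivAt
    exact hga.comp 0 hψd.hasFDerivAt
  have h0 : (fderiv ℝ g a).comp f'.ker.subtypeL = 0 := by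
    rw [← hcomp.fderiv, Filter.EventuallyEq.fderiv_eq hgev]
    exact fderiv_const_apply 0
  have := congrFun (congrArg DFunLike.coe h0) ⟨w, hw⟩
  simpa using this

/-- Exchange the order of a contracted double sum. -/
lemma swap_factor {μ ν : Type*} [Fintype μ] [Fintype ν]
    (A : μ → ν → ℝ) (B : μ → ℝ) (C : ν → ℝ) :
    ∑ p, (∑ q, A p q * C q) * B p = ∑ q, (∑ p, B p * A p q) * C q := by
  have h1 : ∀ p, (∑ q, A p q * C q) * B p = ∑ q, B p * A p q * C q := by
    intro p; rw [Finset.sum_mul]; exact Finset.sum_congr rfl fun q _ => by ring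
  rw [Finset.sum_congr rfl fun p _ => h1 p, Finset.sum_comm]
  exact Finset.sum_congr rfl fun q _ => by rw [Finset.sum_mul]

lemma delta_sum {m : ℕ} (α : Fin m) (f : Fin m → ℝ) :
    ∑ β, (if α = β then (1:ℝ) else 0) * f β = f α := by
  simp [ite_mul]

/-- Pure algebra behind the contraction of Dirac Christoffel symbols with `∂θ_α`. -/
lemma contract_core {n m : ℕ} (D : Fin m → Fin n → ℝ) (W : Fin n → Fin n → ℝ)
    (G : Fin n → ℝ) (Dinv : Fin m → Fin m → ℝ) (N2 : Fin m → ℝ) (α : Fin m)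
    (hΔr : ∀ β, ∑ γ, (∑ i, ∑ j, D α i * W i j * D γ j) * Dinv γ β
      = if α = β then 1 else 0) :
    ∑ j, (∑ l, W j l * (G l + ∑ β, ∑ γ, D β l * Dinv β γ * N2 γ)) * D α j
      = ∑ l, (∑ j, D α j * W j l) * G l + N2 α := by
  rw [swap_factor W (D α) (fun l => G l + ∑ β, ∑ γ, D β l * Dinv β γ * N2 γ)]
  have h1 : ∀ l, (∑ j, D α j * W j l) * (G l + ∑ β, ∑ γ, D β l * Dinv β γ * N2 γ)
      = (∑ j, D α j * W j l) * G l
        + (∑ β, D β l * (∑ γ, Dinv β γ * N2 γ)) * (∑ j, D α j * W j l) := by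
    intro l
    rw [mul_add]
    congr 1
    rw [mul_comm]
    congr 1
    refine Finset.sum_congr rfl fun β _ => ?_
    rw [Finset.mul_sum]
    exact Finset.sum_congr rfl fun γ _ => by ring
  rw [Finset.sum_congr rfl fun l _ => h1 l, Finset.sum_add_distrib]
  congr 1
  rw [swap_factor (fun l β => D β l) (fun l => ∑ j, D α j * W j l)
    (fun β => ∑ γ, Dinv β γ * N2 γ)]
  have h2 : ∀ β, ∑ l, (∑ j, D α j * W j l) * D β l
      = ∑ i, ∑ j, D α i * W i j * D β j := by
    intro β
    have h3 : ∀ l, (∑ j, D α j * W j l) * D β l = ∑ j, D α j * W j l * D β l := by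
      intro l; rw [Finset.sum_mul]
    rw [Finset.sum_congr rfl fun l _ => h3 l, Finset.sum_comm]
  have h4 : ∀ β, (∑ l, (∑ j, D α j * W j l) * D β l) * (∑ γ, Dinv β γ * N2 γ)
      = ∑ γ, (∑ i, ∑ j, D α i * W i j * D β j) * Dinv β γ * N2 γ := by
    intro β
    rw [h2 β, Finset.mul_sum]
    exact Finset.sum_congr rfl fun γ _ => by ring
  rw [Finset.sum_congr rfl fun β _ => h4 β, Finset.sum_comm]
  have h5 : ∀ γ, ∑ β, (∑ i, ∑ j, D α i * W i j * D β j) * Dinv β γ * N2 γ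
      = (if α = γ then 1 else 0) * N2 γ := by
    intro γ; rw [← Finset.sum_mul, hΔr γ]
  rw [Finset.sum_congr rfl fun γ _ => h5 γ, delta_sum]

/-- Pure algebra behind surjectivity of the constraint differential. -/
lemma rinv_core {n m : ℕ} (D : Fin m → Fin n → ℝ) (W : Fin n → Fin n → ℝ)
    (Dinv : Fin m → Fin m → ℝ) (α : Fin m)
    (hΔr : ∀ β, ∑ γ, (∑ i, ∑ j, D α i * W i j * D γ j) * Dinv γ β
      = if α = β then 1 else 0) (c : Fin m → ℝ) :
    ∑ i, (∑ β, (∑ γ, (∑ j, W i j * D γ j) * Dinv γ β) * c β) * D α i = c α := by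
  rw [swap_factor (fun i β => ∑ γ, (∑ j, W i j * D γ j) * Dinv γ β) (D α) c]
  have key : ∀ β, ∑ i, D α i * (∑ γ, (∑ j, W i j * D γ j) * Dinv γ β)
      = if α = β then 1 else 0 := by
    intro β
    have h1 : ∀ i, D α i * (∑ γ, (∑ j, W i j * D γ j) * Dinv γ β)
        = ∑ γ, (∑ j, D α i * W i j * D γ j) * Dinv γ β := by
      intro i
      rw [Finset.mul_sum]
      refine Finset.sum_congr rfl fun γ _ => ?_
      rw [← mul_assoc, Finset.mul_sum]
      congr 1
      exact Finset.sum_congr rfl fun j _ => by ring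
    rw [Finset.sum_congr rfl fun i _ => h1 i, Finset.sum_comm]
    have h2 : ∀ γ, ∑ i, (∑ j, D α i * W i j * D γ j) * Dinv γ β
        = (∑ i, ∑ j, D α i * W i j * D γ j) * Dinv γ β := by
      intro γ; rw [← Finset.sum_mul]
    rw [Finset.sum_congr rfl fun γ _ => h2 γ, hΔr β]
  rw [Finset.sum_congr rfl fun β _ => by rw [key β], delta_sum]

/-- Final algebraic rearrangement of the goal. -/
lemma final_core {n : ℕ} (Yv Zv Dv : Fin n → ℝ) (P : Fin n → Fin n → ℝ)
    (C : Fin n → Fin n → Fin n → ℝ) (E : Fin n → Fin n → ℝ)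
    (hC : ∀ i k, ∑ j, C j i k * Dv j = E i k) :
    ∑ j, (∑ i, Yv i * P i j + ∑ i, ∑ k, Yv i * C j i k * Zv k) * Dv j
      = ∑ i, Yv i * (∑ k, (Zv k * E i k + Dv k * P i k)) := by
  have e1 : ∀ j, (∑ i, Yv i * P i j + ∑ i, ∑ k, Yv i * C j i k * Zv k) * Dv j
      = ∑ i, (Yv i * (Dv j * P i j) + ∑ k, Yv i * Zv k * (C j i k * Dv j)) := by
    intro j
    rw [add_mul, Finset.sum_mul, Finset.sum_mul, ← Finset.sum_add_distrib]
    refine Finset.sum_congr rfl fun i _ => ?_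
    congr 1
    · ring
    · rw [Finset.sum_mul]
      exact Finset.sum_congr rfl fun k _ => by ring
  rw [Finset.sum_congr rfl fun j _ => e1 j, Finset.sum_comm]
  refine Finset.sum_congr rfl fun i _ => ?_
  have e2 : ∑ j, ∑ k, Yv i * Zv k * (C j i k * Dv j)
      = ∑ k, Yv i * (Zv k * E i k) := by
    rw [Finset.sum_comm]
    refine Finset.sum_congr rfl fun k _ => ?_
    calc ∑ j, Yv i * Zv k * (C j i k * Dv j)
        = Yv i * Zv k * ∑ j, C j i k * Dv j := by rw [Finset.mul_sum]
      _ = Yv i * (Zv k * E i k) := by rw [hC i k]; ring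
  rw [Finset.sum_add_distrib, e2, ← Finset.sum_add_distrib, Finset.mul_sum]
  exact Finset.sum_congr rfl fun k _ => by ring

end AuxLemmas

/-- If the vector fields `Y`, `Z` are tangent to the constraint surface
`Σ = {θ_α = 0}` (i.e. `Y θ_α = Y^β_α θ_β` and `Z θ_α = Z^β_α θ_β`), then at every point
of `Σ` the covariant derivative `∇̄_Y Z` with respect to the Dirac connection again
annihilates the constraints: `(∇̄_Y Z) θ_α = 0` on `Σ`; hence the Dirac connection
restricts to a connection on `Σ`. -/
theorem diracConnection_restricts {n m : ℕ}
    (ω ωinv : (Fin n → ℝ) → Matrix (Fin n) (Fin n) ℝ)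
    (hω : ∀ i j, ContDiff ℝ (⊤ : ℕ∞) (fun x => ω x i j))
    (hanti : ∀ x, (ω x)ᵀ = -ω x)
    (hωinv : ∀ x, ω x * ωinv x = 1 ∧ ωinv x * ω x = 1)
    (Γl : (Fin n → ℝ) → Fin n → Fin n → Fin n → ℝ)
    (hΓsym : ∀ x l i j, Γl x l i j = Γl x l j i)
    (hΓcompat : ∀ x i j k, d1 (fun y => ω y i k) x j - Γl x i j k + Γl x k j i = 0)
    (θ : Fin m → (Fin n → ℝ) → ℝ)
    (hθ : ∀ α, ContDiff ℝ (⊤ : ℕ∞) (θ α))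
    (Δinv : (Fin n → ℝ) → Fin m → Fin m → ℝ)
    (hΔl : ∀ x α β, ∑ γ, Δinv x α γ * diracMat ωinv θ x γ β = if α = β then 1 else 0)
    (hΔr : ∀ x α β, ∑ γ, diracMat ωinv θ x α γ * Δinv x γ β = if α = β then 1 else 0)
    (Y Z : (Fin n → ℝ) → Fin n → ℝ)
    (hY : ∀ i, ContDiff ℝ (⊤ : ℕ∞) (fun x => Y x i)) (hZ : ∀ i, ContDiff ℝ (⊤ : ℕ∞) (fun x => Z x i))
    (Yc Zc : (Fin n → ℝ) → Fin m → Fin m → ℝ)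
    (hYtang : ∀ x α, ∑ i, Y x i * d1 (θ α) x i = ∑ β, Yc x α β * θ β x)
    (hZtang : ∀ x α, ∑ i, Z x i * d1 (θ α) x i = ∑ β, Zc x α β * θ β x) :
    ∀ x : Fin n → ℝ, (∀ α, θ α x = 0) →
      ∀ α : Fin m,
        ∑ j, (∑ i, Y x i * d1 (fun y => Z y j) x i
            + ∑ i, ∑ k, Y x i * diracChris ωinv Γl θ Δinv x j i k * Z x k)
          * d1 (θ α) x j = 0 := by
  intro x hx α
  classical
  have hDel : ∀ (α' : Fin m) β, ∑ γ, (∑ i, ∑ j, d1 (θ α') x i * ωinv x i j * d1 (θ γ) x j)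
      * Δinv x γ β = if α' = β then 1 else 0 := by
    intro α' β
    have := hΔr x α' β
    simpa [diracMat] using this
  -- the constraint map and its strict derivative
  have hfd : HasStrictFDerivAt (fun y (β : Fin m) => θ β y)
      (ContinuousLinearMap.pi (fun β => fderiv ℝ (θ β) x)) x := by
    rw [hasStrictFDerivAt_pi]
    intro β
    exact (hθ β).hasStrictFDerivAt (by simp)
  have hLapp : ∀ (v : Fin n → ℝ) β,
      ContinuousLinearMap.pi (fun β => fderiv ℝ (θ β) x) v β = ∑ i, v i * d1 (θ β) x i := by
    intro v β
    simp only [ContinuousLinearMap.pi_apply, d1]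
    exact clm_eq_sum (fderiv ℝ (θ β) x) v
  -- surjectivity of the constraint differential
  have hsurj : (ContinuousLinearMap.pi (fun β => fderiv ℝ (θ β) x)
      : (Fin n → ℝ) →L[ℝ] (Fin m → ℝ)).range = ⊤ := by
    rw [LinearMap.range_eq_top]
    intro c
    refine ⟨fun i => ∑ β, (∑ γ, (∑ j, ωinv x i j * d1 (θ γ) x j) * Δinv x γ β) * c β, ?_⟩
    funext β
    refine (hLapp _ β).trans ?_
    exact rinv_core (fun β' j => d1 (θ β') x j) (fun i j => ωinv x i j) (Δinv x) β
      (hDel β) c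
  -- `Y x` lies in the kernel
  have hker : ContinuousLinearMap.pi (fun β => fderiv ℝ (θ β) x) (Y x) = 0 := by
    funext β
    rw [hLapp, hYtang x β]
    simp [hx]
  -- the function `g = Z θ_α` and its derivative
  have hder : ∀ k : Fin n, HasFDerivAt (fun y => Z y k * d1 (θ α) y k)
      (Z x k • fderiv ℝ (fun y => d1 (θ α) y k) x
        + d1 (θ α) x k • fderiv ℝ (fun y => Z y k) x) x :=
    fun k => (((hZ k).differentiable (by simp) x).hasFDerivAt).mul
      (((contDiff_d1 (hθ α) k).differentiable (by simp) x).hasFDerivAt)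
  have hgder : HasFDerivAt (fun y => ∑ k, Z y k * d1 (θ α) y k)
      (∑ k, (Z x k • fderiv ℝ (fun y => d1 (θ α) y k) x
        + d1 (θ α) x k • fderiv ℝ (fun y => Z y k) x)) x :=
    HasFDerivAt.fun_sum (fun k _ => hder k)
  have hgb : ∀ i, fderiv ℝ (fun y => ∑ k, Z y k * d1 (θ α) y k) x (bvec n i)
      = ∑ k, (Z x k * d2 (θ α) x i k + d1 (θ α) x k * d1 (fun y => Z y k) x i) := by
    intro i
    rw [hgder.fderiv]
    simp only [ContinuousLinearMap.sum_apply, ContinuousLinearMap.add_apply,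
      ContinuousLinearMap.coe_smul', Pi.smul_apply, smul_eq_mul]
    refine Finset.sum_congr rfl fun k _ => ?_
    simp only [d1, d2]
  -- derivative of g in the direction Y x vanishes
  have hvanish : fderiv ℝ (fun y => ∑ k, Z y k * d1 (θ α) y k) x (Y x) = 0 := by
    refine key_vanish hfd hsurj hgder.differentiableAt ?_ hker
    intro y hy
    have hθy : ∀ β, θ β y = 0 := by
      intro β
      have := congrFun hy β
      simpa [hx β] using this
    rw [hZtang y α]
    simp [hθy]
  -- contraction of the Dirac Christoffel symbols
  have hchris : ∀ i k, ∑ j, diracChris ωinv Γl θ Δinv x j i k * d1 (θ α) x j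
      = d2 (θ α) x i k := by
    intro i k
    have h : ∑ j, (∑ l, ωinv x j l * (Γl x l i k
          + ∑ β, ∑ γ, d1 (θ β) x l * Δinv x β γ * nabla2 ωinv Γl (θ γ) x i k)) *
            d1 (θ α) x j
        = ∑ l, (∑ j, d1 (θ α) x j * ωinv x j l) * Γl x l i k
          + nabla2 ωinv Γl (θ α) x i k :=
      contract_core (fun β j => d1 (θ β) x j) (fun i' j' => ωinv x i' j')
        (fun l => Γl x l i k) (Δinv x)
        (fun γ => nabla2 ωinv Γl (θ γ) x i k) α (hDel α)
    have hL : ∑ j, diracChris ωinv Γl θ Δinv x j i k * d1 (θ α) x j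
        = ∑ j, (∑ l, ωinv x j l * (Γl x l i k
          + ∑ β, ∑ γ, d1 (θ β) x l * Δinv x β γ * nabla2 ωinv Γl (θ γ) x i k)) *
            d1 (θ α) x j := by
      refine Finset.sum_congr rfl fun j _ => ?_
      simp only [diracChris]
    have hN : nabla2 ωinv Γl (θ α) x i k
        = d2 (θ α) x i k - ∑ l, (∑ j, d1 (θ α) x j * ωinv x j l) * Γl x l i k := by
      simp only [nabla2, chris]
      rw [swap_factor (fun m' l => ωinv x m' l) (fun m' => d1 (θ α) x m')
        (fun l => Γl x l i k)]
    rw [hL, h, hN]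
    ring
  -- final rearrangement
  have hfin := final_core (Y x) (Z x) (fun j => d1 (θ α) x j)
    (fun i j => d1 (fun y => Z y j) x i)
    (fun j i k => diracChris ωinv Γl θ Δinv x j i k)
    (fun i k => d2 (θ α) x i k) hchris
  rw [hfin]
  rw [← hvanish, clm_eq_sum (fderiv ℝ (fun y => ∑ k, Z y k * d1 (θ α) y k) x) (Y x)]
  refine Finset.sum_congr rfl fun i _ => ?_
  rw [hgb i]
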